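/- arXiv:1112.4985 — 2 statements merged into one kernel-verified Lean document; each statement's English description precedes it below -/
import Mathlib

section
/- Let φ ∈ C_c(ℝ) and let T_φ f = P^+(φ * f̃) be the corresponding Wiener–Hopf operator on 𝐄. Then T_φ commutes with 𝐒_t for every t > 0 if and only if the support of φ is contained in [0, +∞). (Lemma 4) -/
open MeasureTheory Filter Complex Set
open scoped Real ENNReal Topology NNReal

noncomputable section

/-- The weighted measure `ω(x)^p dx` on `ℝ⁺ = [0,∞)` (a measure on `ℝ` carried by `[0,∞)`),
so that `𝐄 = L^p_ω(ℝ⁺)` is `Lp ℂ p (wmp p ω)`. -/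
def wmp (p : ℝ) (ω : ℝ → ℝ) : Measure ℝ :=
  (volume.restrict (Set.Ici (0 : ℝ))).withDensity fun x => ENNReal.ofReal (ω x ^ p)

/-- The Fourier–Laplace transform `φ̂(z) = ∫_ℝ φ(t) e^{-izt} dt`. -/
def fourierLaplace (φ : ℝ → ℂ) (z : ℂ) : ℂ :=
  ∫ t : ℝ, φ t * Complex.exp (-Complex.I * z * (t : ℂ))

/-! The weight measure `ω^p dx` on `ℝ⁺` has the same null sets as Lebesgue measure there, so
everything reduces to statements about `C f = φ ⋆ f̃` for `f ∈ 𝐄`. As `𝐒_t` is translation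
followed by restriction to `ℝ⁺`, `T_φ 𝐒_t f` is `C f (· - t)` on `ℝ⁺`, while `𝐒_t T_φ f` is the same
function cut off on `[0, t)`. Hence `T_φ` commutes with all `𝐒_t`, `t > 0`, iff every `C f`
vanishes on `(-∞, 0)`. This is clear from the supports when `supp φ ⊆ [0, ∞)`. Conversely, the test
function `f = 1_{[0, ε]}` gives `C f u = ∫_{u-ε}^{u} φ`, a continuous function of `u`; so these
integrals vanish for all `u < 0`, `ε > 0`, and differentiating in `u` gives `φ = 0` on `(-∞, 0)`. -/

section WeightedMeasure

variable {p : ℝ} {ω : ℝ → ℝ}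

lemma ae_wmp (hω : Measurable ω) (hω_pos : ∀ x, 0 < ω x) :
    ae (wmp p ω) = ae (volume.restrict (Ici 0)) := by
  refine le_antisymm (withDensity_absolutelyContinuous _ _).ae_le
    (withDensity_absolutelyContinuous' ?_ (ae_of_all _ fun x => ?_)).ae_le
  · exact (ENNReal.measurable_ofReal.comp (hω.pow_const p)).aemeasurable
  · exact (ENNReal.ofReal_pos.2 (Real.rpow_pos_of_pos (hω_pos x) p)).ne'

lemma isLocallyFiniteMeasure_wmp (hω : Continuous ω) (hp : 0 ≤ p) :
    IsLocallyFiniteMeasure (wmp p ω) :=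
  .withDensity_ofReal (hω.rpow_const fun _ => Or.inr hp)

lemma exists_Lp_indicator_Ici_ae_eq_indicator_Icc (q : ℝ≥0∞) (hω : Continuous ω)
    (hω_pos : ∀ x, 0 < ω x) (hp : 0 ≤ p) (ε : ℝ) :
    ∃ f : Lp ℂ q (wmp p ω), (Ici 0).indicator f =ᵐ[volume] (Icc 0 ε).indicator 1 := by
  have := isLocallyFiniteMeasure_wmp hω hp
  have hfin : wmp p ω (Icc 0 ε) ≠ ∞ := measure_Icc_lt_top.ne
  refine ⟨indicatorConstLp q measurableSet_Icc hfin 1, ?_⟩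
  have h := indicatorConstLp_coeFn (p := q) (hs := measurableSet_Icc) (hμs := hfin) (c := (1 : ℂ))
  rwa [ae_wmp hω.measurable hω_pos, ae_eq_restrict_iff_indicator_ae_eq measurableSet_Ici,
    indicator_indicator, inter_eq_right.2 Icc_subset_Ici_self] at h

end WeightedMeasure

section HalfLine

variable {E : Type*} [Zero E]

lemma ite_sub_eq_indicator_Ici (t : ℝ) (f : ℝ → E) :
    (fun x => if t ≤ x then f (x - t) else 0) = fun x => (Ici 0).indicator f (x - t) := by
  ext x
  simp [indicator_apply, sub_nonneg]

lemma indicator_Ici_comp_sub {t : ℝ} (ht : 0 ≤ t) (f : ℝ → E) :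
    (Ici 0).indicator (fun x => (Ici 0).indicator f (x - t)) =
      fun x => (Ici 0).indicator f (x - t) := by
  refine indicator_eq_self.2 fun x hx => mem_Ici.2 ?_
  linarith [mem_Ici.1 (mem_of_indicator_ne_zero hx)]

lemma indicator_Ici_ae_eq_of_ae_eq_comp_sub {S f : ℝ → E} {t : ℝ} (ht : 0 ≤ t)
    (h : S =ᵐ[volume.restrict (Ici 0)] fun x => (Ici 0).indicator f (x - t)) :
    (Ici 0).indicator S =ᵐ[volume] fun x => (Ici 0).indicator f (x - t) := by
  simpa only [indicator_Ici_comp_sub ht] using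
    (ae_eq_restrict_iff_indicator_ae_eq measurableSet_Ici).1 h

lemma indicator_Ici_comp_sub_ae_eq {f g : ℝ → E} (h : f =ᵐ[volume.restrict (Ici 0)] g) (t : ℝ) :
    (fun x => (Ici 0).indicator f (x - t)) =ᵐ[volume.restrict (Ici 0)]
      fun x => (Ici 0).indicator g (x - t) :=
  ae_restrict_of_ae <| (measurePreserving_sub_right volume t).quasiMeasurePreserving.ae_eq
    ((ae_eq_restrict_iff_indicator_ae_eq measurableSet_Ici).1 h)

lemma ae_eq_indicator_Ici_of_forall_comp_sub {f : ℝ → E}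
    (h : ∀ t > 0, (fun x => f (x - t)) =ᵐ[volume.restrict (Ici 0)]
      fun x => (Ici 0).indicator f (x - t)) :
    f =ᵐ[volume] (Ici 0).indicator f := by
  have hshift : ∀ n : ℕ, ∀ᵐ u : ℝ, 0 ≤ u + (n + 1) → f u = (Ici 0).indicator f u := by
    intro n
    have h' := (ae_restrict_iff' measurableSet_Ici).1 (h (n + 1) (by positivity))
    simpa using (measurePreserving_add_right volume ((n : ℝ) + 1)).quasiMeasurePreserving.ae h'
  filter_upwards [ae_all_iff.2 hshift] with u hu
  obtain ⟨n, hn⟩ := exists_nat_ge (-u)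
  exact hu n (by linarith)

end HalfLine

lemma Continuous.eqOn_compl_of_ae_eq_indicator {X Y : Type*} [TopologicalSpace X]
    [MeasurableSpace X] [OpensMeasurableSpace X] {μ : Measure X} [μ.IsOpenPosMeasure]
    [TopologicalSpace Y] [T2Space Y] [Zero Y] {f : X → Y} {s : Set X} (hf : Continuous f)
    (hs : IsClosed s) (h : f =ᵐ[μ] s.indicator f) : EqOn f 0 sᶜ := by
  refine Measure.eqOn_open_of_ae_eq (μ := μ) ?_ hs.isOpen_compl hf.continuousOn continuousOn_const
  filter_upwards [ae_restrict_of_ae h, ae_restrict_mem hs.isOpen_compl.measurableSet] with x hx hxs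
  rwa [indicator_of_notMem hxs] at hx

lemma eqOn_Iio_zero_of_intervalIntegral_eq_zero {E : Type*} [NormedAddCommGroup E]
    [NormedSpace ℝ E] [CompleteSpace E] {φ : ℝ → E} (hφ : Continuous φ)
    (h : ∀ ε > 0, ∀ u < 0, ∫ y in (u - ε)..u, φ y = 0) : EqOn φ 0 (Iio 0) := by
  intro s hs
  have hF : HasDerivAt (fun u => ∫ y in (s - 1)..u, φ y) (φ s) s :=
    intervalIntegral.integral_hasDerivAt_right (hφ.intervalIntegrable _ _)
      (hφ.stronglyMeasurableAtFilter _ _) hφ.continuousAt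
  have hF0 : (fun u => ∫ y in (s - 1)..u, φ y) =ᶠ[𝓝 s] fun _ => 0 := by
    filter_upwards [Ioo_mem_nhds (by linarith : s - 1 < s) (hs : s < 0)] with u hu
    simpa using h (u - (s - 1)) (by linarith [hu.1]) u hu.2
  exact hF.unique ((hasDerivAt_const s (0 : E)).congr_of_eventuallyEq hF0)

open scoped Convolution Pointwise

section Convolution

variable {𝕜 E E' F : Type*} [NontriviallyNormedField 𝕜] [NormedAddCommGroup E]
  [NormedAddCommGroup E'] [NormedAddCommGroup F] [NormedSpace 𝕜 E] [NormedSpace 𝕜 E']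
  [NormedSpace 𝕜 F] [NormedSpace ℝ F] (L : E →L[𝕜] E' →L[𝕜] F)

lemma convolution_comp_sub (f : ℝ → E) (g : ℝ → E') (t : ℝ) :
    (f ⋆[L] fun x => g (x - t)) = fun x => (f ⋆[L] g) (x - t) := by
  ext x
  simp only [convolution_def, sub_right_comm]

lemma support_convolution_subset_Ici {f : ℝ → E} {g : ℝ → E'} (hf : Function.support f ⊆ Ici 0)
    (hg : Function.support g ⊆ Ici 0) : Function.support (f ⋆[L] g) ⊆ Ici 0 :=
  (support_convolution_subset L).trans <|
    (add_subset_add hf hg).trans (by simpa using Set.Ici_add_Ici_subset (0 : ℝ) 0)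

end Convolution

lemma convolution_indicator_Icc_one {𝕜 : Type*} [RCLike 𝕜] (φ : ℝ → 𝕜) {ε : ℝ} (hε : 0 ≤ ε)
    (u : ℝ) :
    (φ ⋆[ContinuousLinearMap.mul 𝕜 𝕜] (Icc 0 ε).indicator 1) u = ∫ y in (u - ε)..u, φ y := by
  have h : ∀ y, φ y * (Icc 0 ε).indicator 1 (u - y) = (Icc (u - ε) u).indicator φ y := by
    intro y
    by_cases hy : y ∈ Icc (u - ε) u
    · have : u - y ∈ Icc 0 ε := ⟨by linarith [hy.2], by linarith [hy.1]⟩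
      simp [hy, this]
    · have : u - y ∉ Icc 0 ε := fun h' => hy ⟨by linarith [h'.2], by linarith [h'.1]⟩
      simp [hy, this]
  simp only [convolution_def, ContinuousLinearMap.mul_apply', h]
  rw [integral_indicator measurableSet_Icc, intervalIntegral.integral_of_le (by linarith),
    integral_Icc_eq_integral_Ioc]

lemma tsupport_subset_Ici_of_convolution_indicator_Icc {𝕜 : Type*} [RCLike 𝕜] {φ : ℝ → 𝕜}
    (hφ : Continuous φ) (hφ_supp : HasCompactSupport φ)
    (h : ∀ ε > 0, φ ⋆[ContinuousLinearMap.mul 𝕜 𝕜] (Icc 0 ε).indicator 1 =ᵐ[volume]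
      (Ici 0).indicator (φ ⋆[ContinuousLinearMap.mul 𝕜 𝕜] (Icc 0 ε).indicator 1)) :
    tsupport φ ⊆ Ici 0 := by
  refine closure_minimal (fun s hs => mem_Ici.2 <| not_lt.1 fun hs0 => hs ?_) isClosed_Ici
  refine eqOn_Iio_zero_of_intervalIntegral_eq_zero hφ (fun ε hε u hu => ?_) hs0
  have hcont : Continuous (φ ⋆[ContinuousLinearMap.mul 𝕜 𝕜] (Icc 0 ε).indicator 1) :=
    hφ_supp.continuous_convolution_left _ hφ
      ((locallyIntegrable_const (1 : 𝕜)).indicator measurableSet_Icc)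
  rw [← convolution_indicator_Icc_one φ hε.le]
  exact hcont.eqOn_compl_of_ae_eq_indicator isClosed_Ici (h ε hε) (not_le.2 hu)

theorem lemma4_general
    (p : ℝ≥0∞) [Fact (1 ≤ p)]
    (ω : ℝ → ℝ) (hω_cont : Continuous ω) (hω_pos : ∀ x, 0 < ω x)
    (Sp : ℝ → (Lp ℂ p (wmp p.toReal ω) →L[ℂ] Lp ℂ p (wmp p.toReal ω)))
    (hSp : ∀ t : ℝ, 0 ≤ t → ∀ f : Lp ℂ p (wmp p.toReal ω),
      (Sp t f : ℝ → ℂ) =ᵐ[wmp p.toReal ω] fun x => if t ≤ x then f (x - t) else 0)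
    (φ : ℝ → ℂ) (hφ_cont : Continuous φ) (hφ_supp : HasCompactSupport φ)
    (Tφ : Lp ℂ p (wmp p.toReal ω) →L[ℂ] Lp ℂ p (wmp p.toReal ω))
    (hTφ : ∀ f : Lp ℂ p (wmp p.toReal ω),
      (Tφ f : ℝ → ℂ) =ᵐ[wmp p.toReal ω]
        fun x => ∫ y : ℝ, φ y * Set.indicator (Set.Ici (0 : ℝ)) (⇑f) (x - y)) :
    (∀ t : ℝ, 0 < t → Tφ.comp (Sp t) = (Sp t).comp Tφ) ↔ tsupport φ ⊆ Set.Ici (0 : ℝ) := by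
  set L := ContinuousLinearMap.mul ℂ ℂ
  have hae := ae_wmp (p := p.toReal) hω_cont.measurable hω_pos
  simp only [hae, ite_sub_eq_indicator_Ici] at hSp hTφ
  change ∀ f : Lp ℂ p (wmp p.toReal ω), _ =ᵐ[_] φ ⋆[L] (Ici 0).indicator f at hTφ
  have hTS : ∀ t > 0, ∀ f : Lp ℂ p (wmp p.toReal ω),
      Tφ (Sp t f) =ᵐ[volume.restrict (Ici 0)] fun x => (φ ⋆[L] (Ici 0).indicator f) (x - t) :=
    fun t ht f => calc
      Tφ (Sp t f) =ᵐ[volume.restrict (Ici 0)] φ ⋆[L] (Ici 0).indicator (Sp t f) := hTφ _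
      _ = φ ⋆[L] fun x => (Ici 0).indicator f (x - t) :=
        convolution_congr L (ae_eq_refl φ)
          (indicator_Ici_ae_eq_of_ae_eq_comp_sub ht.le (hSp t ht.le f))
      _ = fun x => (φ ⋆[L] (Ici 0).indicator f) (x - t) := convolution_comp_sub L _ _ t
  have hST : ∀ t > 0, ∀ f : Lp ℂ p (wmp p.toReal ω),
      Sp t (Tφ f) =ᵐ[volume.restrict (Ici 0)]
        fun x => (Ici 0).indicator (φ ⋆[L] (Ici 0).indicator f) (x - t) := fun t ht f =>
    (hSp t ht.le _).trans (indicator_Ici_comp_sub_ae_eq (hTφ f) t)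
  constructor
  · intro hcomm
    refine tsupport_subset_Ici_of_convolution_indicator_Icc hφ_cont hφ_supp fun ε _ => ?_
    obtain ⟨f, hf⟩ := exists_Lp_indicator_Ici_ae_eq_indicator_Icc p hω_cont hω_pos
      ENNReal.toReal_nonneg ε
    rw [← convolution_congr L (ae_eq_refl φ) hf]
    exact ae_eq_indicator_Ici_of_forall_comp_sub fun t ht =>
      (hTS t ht f).symm.trans (DFunLike.congr_fun (hcomm t ht) f ▸ hST t ht f)
  · intro hsupp t ht
    ext1 f
    refine Lp.ext ?_
    rw [hae]
    refine (hTS t ht f).trans (EventuallyEq.trans ?_ (hST t ht f).symm)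
    rw [indicator_eq_self.2 (support_convolution_subset_Ici L
      ((subset_tsupport φ).trans hsupp) support_indicator_subset)]

/-- Lemma 4: for `φ ∈ C_c(ℝ)`, the Wiener–Hopf operator `T_φ f = P⁺(φ * f̃)` on `𝐄 = L^p_ω(ℝ⁺)`
commutes with every right translation `𝐒_t`, `t > 0`, iff `supp φ ⊆ [0, ∞)`. -/
theorem lemma4
    (p : ℝ≥0∞) [Fact (1 ≤ p)] (hp : p ≠ ∞)
    (ω : ℝ → ℝ) (hω_cont : Continuous ω) (hω_pos : ∀ x, 0 < ω x)
    (hω_sub : ∀ t : ℝ, 0 ≤ t → ∃ c C : ℝ, 0 < c ∧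
      ∀ x : ℝ, 0 ≤ x → c ≤ ω (x + t) / ω x ∧ ω (x + t) / ω x ≤ C)
    (Sp : ℝ → (Lp ℂ p (wmp p.toReal ω) →L[ℂ] Lp ℂ p (wmp p.toReal ω)))
    (hSp : ∀ t : ℝ, 0 ≤ t → ∀ f : Lp ℂ p (wmp p.toReal ω),
      (Sp t f : ℝ → ℂ) =ᵐ[wmp p.toReal ω] fun x => if t ≤ x then f (x - t) else 0)
    (φ : ℝ → ℂ) (hφ_cont : Continuous φ) (hφ_supp : HasCompactSupport φ)
    (Tφ : Lp ℂ p (wmp p.toReal ω) →L[ℂ] Lp ℂ p (wmp p.toReal ω))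
    (hTφ : ∀ f : Lp ℂ p (wmp p.toReal ω),
      (Tφ f : ℝ → ℂ) =ᵐ[wmp p.toReal ω]
        fun x => ∫ y : ℝ, φ y * Set.indicator (Set.Ici (0 : ℝ)) (⇑f) (x - y)) :
    (∀ t : ℝ, 0 < t → Tφ.comp (Sp t) = (Sp t).comp Tφ) ↔ tsupport φ ⊆ Set.Ici (0 : ℝ) :=
  lemma4_general p ω hω_cont hω_pos Sp hSp φ hφ_cont hφ_supp Tφ hTφ
end
end

section
/- Let φ ∈ C_c(ℝ) and let T_φ f = P^+(φ * f̃) be the corresponding Wiener–Hopf operator on 𝐄. Then T_φ commutes with the left translation P^+𝐒_{−t} for every t > 0 if and only if the support of φ is contained in (−∞, 0]. (Lemma 5) -/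
open MeasureTheory Filter Complex Set
open scoped Real ENNReal Topology NNReal

noncomputable section

namespace Lemma5Aux

variable {p : ℝ} {ω : ℝ → ℝ}

lemma ac_wmp (hω_cont : Continuous ω) (hω_pos : ∀ x, 0 < ω x) :
    volume.restrict (Set.Ici (0:ℝ)) ≪ wmp p ω := by
  apply withDensity_absolutelyContinuous'
  · exact (ENNReal.continuous_ofReal.comp
      (hω_cont.rpow_const fun x => Or.inl (hω_pos x).ne')).aemeasurable
  · refine Filter.Eventually.of_forall fun x => ?_
    simp only [ne_eq, ENNReal.ofReal_eq_zero, not_le]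
    exact Real.rpow_pos_of_pos (hω_pos x) p

lemma null_of_wmp_null (hω_cont : Continuous ω) (hω_pos : ∀ x, 0 < ω x) {N : Set ℝ}
    (hN : wmp p ω N = 0) : volume (N ∩ Set.Ici (0:ℝ)) = 0 := by
  have h := ac_wmp (p := p) hω_cont hω_pos hN
  rwa [Measure.restrict_apply' measurableSet_Ici] at h

lemma wmp_null_of_null {N : Set ℝ} (hN : volume (N ∩ Set.Ici (0:ℝ)) = 0) :
    wmp p ω N = 0 := by
  apply withDensity_absolutelyContinuous (volume.restrict (Set.Ici (0:ℝ)))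
    (fun x => ENNReal.ofReal (ω x ^ p))
  rwa [Measure.restrict_apply' measurableSet_Ici]

lemma ae_nonneg : ∀ᵐ x ∂(wmp p ω), 0 ≤ x := by
  rw [ae_iff]
  apply wmp_null_of_null
  have : {a : ℝ | ¬ 0 ≤ a} ∩ Set.Ici 0 = ∅ := by
    ext x
    simp only [Set.mem_inter_iff, Set.mem_setOf_eq, Set.mem_Ici, Set.mem_empty_iff_false,
      iff_false, not_and, not_not]
    tauto
  rw [this, measure_empty]

lemma shift_ae (hω_cont : Continuous ω) (hω_pos : ∀ x, 0 < ω x) {g h : ℝ → ℂ} {t : ℝ}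
    (ht : 0 ≤ t) (hgh : g =ᵐ[wmp p ω] h) :
    (fun x => g (x + t)) =ᵐ[wmp p ω] fun x => h (x + t) := by
  rw [Filter.EventuallyEq, ae_iff] at hgh ⊢
  have hN : volume ({x | ¬ g x = h x} ∩ Set.Ici 0) = 0 :=
    null_of_wmp_null hω_cont hω_pos hgh
  apply wmp_null_of_null
  have hpre : volume ((fun x => x + t) ⁻¹' ({x | ¬ g x = h x} ∩ Set.Ici 0)) = 0 :=
    (measurePreserving_add_right volume t).quasiMeasurePreserving.preimage_null hN
  refine measure_mono_null ?_ hpre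
  rintro x ⟨hx, hx0⟩
  exact ⟨hx, by simp only [Set.mem_Ici] at hx0 ⊢; linarith⟩

lemma conv_congr (hω_cont : Continuous ω) (hω_pos : ∀ x, 0 < ω x) (φ : ℝ → ℂ) {g h : ℝ → ℂ}
    (hgh : g =ᵐ[wmp p ω] h) (x : ℝ) :
    ∫ y : ℝ, φ y * (Set.Ici (0:ℝ)).indicator g (x - y)
      = ∫ y : ℝ, φ y * (Set.Ici (0:ℝ)).indicator h (x - y) := by
  apply integral_congr_ae
  rw [Filter.EventuallyEq, ae_iff] at hgh ⊢
  have hN : volume ({u | ¬ g u = h u} ∩ Set.Ici 0) = 0 :=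
    null_of_wmp_null hω_cont hω_pos hgh
  have hpre : volume ((fun y => x - y) ⁻¹' ({u | ¬ g u = h u} ∩ Set.Ici 0)) = 0 :=
    (Measure.measurePreserving_sub_left volume x).quasiMeasurePreserving.preimage_null hN
  refine measure_mono_null ?_ hpre
  intro y hy
  simp only [Set.mem_setOf_eq] at hy
  by_cases hxy : x - y ∈ Set.Ici (0:ℝ)
  · refine ⟨fun hc => hy ?_, hxy⟩
    rw [Set.indicator_of_mem hxy, Set.indicator_of_mem hxy, hc]
  · exact absurd (by rw [Set.indicator_of_notMem hxy, Set.indicator_of_notMem hxy]) hy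

lemma vanish (hω_cont : Continuous ω) (hω_pos : ∀ x, 0 < ω x) {h : ℝ → ℂ}
    (hc : Continuous h) (h0 : h =ᵐ[wmp p ω] fun _ => (0:ℂ)) :
    ∀ x : ℝ, 0 ≤ x → h x = 0 := by
  intro x hx
  by_contra hne
  rw [Filter.EventuallyEq, ae_iff] at h0
  have hN : volume ({u | ¬ h u = 0} ∩ Set.Ici 0) = 0 :=
    null_of_wmp_null hω_cont hω_pos h0
  have hopen : IsOpen {u : ℝ | h u ≠ 0} := isOpen_compl_singleton.preimage hc
  obtain ⟨δ, hδ, hball⟩ := Metric.isOpen_iff.1 hopen x hne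
  have hsub : Set.Ioo x (x + δ) ⊆ {u | ¬ h u = 0} ∩ Set.Ici 0 := by
    rintro y ⟨h1, h2⟩
    refine ⟨hball ?_, by simp only [Set.mem_Ici]; linarith⟩
    rw [Metric.mem_ball, Real.dist_eq, abs_lt]
    constructor <;> linarith
  have := measure_mono_null hsub hN
  rw [Real.volume_Ioo] at this
  simp only [add_sub_cancel_left] at this
  exact (ENNReal.ofReal_pos.2 hδ).ne' this

lemma wmp_Icc_ne_top (hω_cont : Continuous ω) (hω_pos : ∀ x, 0 < ω x) (a b : ℝ) :
    wmp p ω (Set.Icc a b) ≠ ∞ := by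
  have hcont : Continuous fun x => ω x ^ p :=
    hω_cont.rpow_const fun x => Or.inl (hω_pos x).ne'
  obtain ⟨M, hM⟩ := isCompact_Icc.exists_bound_of_continuousOn
    (hcont.continuousOn : ContinuousOn (fun x => ω x ^ p) (Set.Icc a b))
  rw [wmp, withDensity_apply _ measurableSet_Icc]
  have hle : ∫⁻ x in Set.Icc a b, ENNReal.ofReal (ω x ^ p)
        ∂(volume.restrict (Set.Ici (0:ℝ)))
      ≤ ENNReal.ofReal M * (volume.restrict (Set.Ici (0:ℝ))) (Set.Icc a b) := by
    rw [← setLIntegral_const]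
    refine setLIntegral_mono measurable_const fun x hx => ?_
    exact ENNReal.ofReal_le_ofReal ((le_abs_self _).trans ((Real.norm_eq_abs _ ▸ hM x hx)))
  refine ne_top_of_le_ne_top ?_ hle
  apply ENNReal.mul_ne_top ENNReal.ofReal_ne_top
  rw [Measure.restrict_apply' measurableSet_Ici]
  exact ne_top_of_le_ne_top (by simp [Real.volume_Icc]) (measure_mono Set.inter_subset_left)

end Lemma5Aux

/-- Lemma 5: for `φ ∈ C_c(ℝ)`, the Wiener–Hopf operator `T_φ f = P⁺(φ * f̃)` on `𝐄 = L^p_ω(ℝ⁺)`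
commutes with every left translation `P⁺𝐒_{-t}`, `t > 0`, iff `supp φ ⊆ (-∞, 0]`. -/
theorem lemma5
    (p : ℝ≥0∞) [Fact (1 ≤ p)] (hp : p ≠ ∞)
    (ω : ℝ → ℝ) (hω_cont : Continuous ω) (hω_pos : ∀ x, 0 < ω x)
    (hω_sub : ∀ t : ℝ, 0 ≤ t → ∃ c C : ℝ, 0 < c ∧
      ∀ x : ℝ, 0 ≤ x → c ≤ ω (x + t) / ω x ∧ ω (x + t) / ω x ≤ C)
    (Sm : ℝ → (Lp ℂ p (wmp p.toReal ω) →L[ℂ] Lp ℂ p (wmp p.toReal ω)))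
    (hSm : ∀ t : ℝ, 0 ≤ t → ∀ f : Lp ℂ p (wmp p.toReal ω),
      (Sm t f : ℝ → ℂ) =ᵐ[wmp p.toReal ω] fun x => f (x + t))
    (φ : ℝ → ℂ) (hφ_cont : Continuous φ) (hφ_supp : HasCompactSupport φ)
    (Tφ : Lp ℂ p (wmp p.toReal ω) →L[ℂ] Lp ℂ p (wmp p.toReal ω))
    (hTφ : ∀ f : Lp ℂ p (wmp p.toReal ω),
      (Tφ f : ℝ → ℂ) =ᵐ[wmp p.toReal ω]
        fun x => ∫ y : ℝ, φ y * Set.indicator (Set.Ici (0 : ℝ)) (⇑f) (x - y)) :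
    (∀ t : ℝ, 0 < t → Tφ.comp (Sm t) = (Sm t).comp Tφ) ↔ tsupport φ ⊆ Set.Iic (0 : ℝ) := by
  constructor
  · -- forward direction
    intro hcomm
    -- primitive of φ
    set Φ : ℝ → ℂ := fun u => ∫ s in (0:ℝ)..u, φ s with hΦdef
    have hInt : ∀ a b : ℝ, IntervalIntegrable φ volume a b := fun a b =>
      hφ_cont.intervalIntegrable a b
    have hΦder : ∀ u : ℝ, HasDerivAt Φ (φ u) u := fun u =>
      intervalIntegral.integral_hasDerivAt_right (hInt 0 u)
        (hφ_cont.stronglyMeasurableAtFilter volume (𝓝 u)) hφ_cont.continuousAt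
    have hΦcont : Continuous Φ :=
      continuous_iff_continuousAt.2 fun u => (hΦder u).continuousAt
    have hIcc : ∀ a b : ℝ, a ≤ b → (∫ y in Set.Icc a b, φ y) = Φ b - Φ a := by
      intro a b hab
      rw [MeasureTheory.integral_Icc_eq_integral_Ioc, ← intervalIntegral.integral_of_le hab]
      exact eq_sub_of_add_eq'
        (intervalIntegral.integral_add_adjacent_intervals (hInt 0 a) (hInt a b))
    -- main claim
    have hconst : ∀ t : ℝ, 0 < t → ∀ ε : ℝ, 0 < ε → ε < t →
        (∫ y in Set.Icc (t - ε) t, φ y) = 0 := by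
      intro t ht ε hε hεt
      set f : Lp ℂ p (wmp p.toReal ω) := indicatorConstLp p measurableSet_Icc
        (Lemma5Aux.wmp_Icc_ne_top hω_cont hω_pos 0 ε) (1:ℂ) with hfdef
      have hf : ⇑f =ᵐ[wmp p.toReal ω] (Set.Icc (0:ℝ) ε).indicator fun _ => (1:ℂ) := indicatorConstLp_coeFn
      have heq : Tφ (Sm t f) = Sm t (Tφ f) := by
        have h := DFunLike.congr_fun (hcomm t ht) f
        simpa using h
      have hSf : ⇑(Sm t f) =ᵐ[wmp p.toReal ω]
          fun u => (Set.Icc (0:ℝ) ε).indicator (fun _ => (1:ℂ)) (u + t) :=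
        (hSm t ht.le f).trans (Lemma5Aux.shift_ae hω_cont hω_pos ht.le hf)
      have hL : ⇑(Tφ (Sm t f)) =ᵐ[wmp p.toReal ω] fun _ => (0:ℂ) := by
        refine (hTφ (Sm t f)).trans (Filter.EventuallyEq.of_eq (funext fun x => ?_))
        rw [Lemma5Aux.conv_congr hω_cont hω_pos φ hSf x]
        have hz : ∀ y : ℝ, φ y * (Set.Ici (0:ℝ)).indicator
            (fun u => (Set.Icc (0:ℝ) ε).indicator (fun _ => (1:ℂ)) (u + t)) (x - y) = 0 := by
          intro y
          by_cases hxy : x - y ∈ Set.Ici (0:ℝ)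
          · rw [Set.indicator_of_mem hxy]
            have hnm : x - y + t ∉ Set.Icc (0:ℝ) ε := by
              simp only [Set.mem_Ici] at hxy
              simp only [Set.mem_Icc, not_and, not_le]
              intro _; linarith
            rw [Set.indicator_of_notMem hnm, mul_zero]
          · rw [Set.indicator_of_notMem hxy, mul_zero]
        simp only [hz, integral_zero]
      -- compute the other side
      have hcollapse : (Set.Ici (0:ℝ)).indicator ((Set.Icc (0:ℝ) ε).indicator fun _ => (1:ℂ))
          = (Set.Icc (0:ℝ) ε).indicator (fun _ => (1:ℂ)) := by
        rw [Set.indicator_indicator, Set.inter_eq_self_of_subset_right Set.Icc_subset_Ici_self]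
      have hG : ∀ u : ℝ, (∫ y : ℝ, φ y * (Set.Ici (0:ℝ)).indicator (⇑f) (u - y))
          = ∫ y in Set.Icc (u - ε) u, φ y := by
        intro u
        rw [Lemma5Aux.conv_congr hω_cont hω_pos φ hf u]
        have h1 : ∀ y : ℝ, φ y * (Set.Ici (0:ℝ)).indicator
            ((Set.Icc (0:ℝ) ε).indicator fun _ => (1:ℂ)) (u - y)
            = (Set.Icc (u - ε) u).indicator φ y := by
          intro y
          rw [hcollapse]
          by_cases hy : y ∈ Set.Icc (u - ε) u
          · have hmem : u - y ∈ Set.Icc (0:ℝ) ε := by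
              simp only [Set.mem_Icc] at hy ⊢
              constructor <;> linarith [hy.1, hy.2]
            rw [Set.indicator_of_mem hmem, Set.indicator_of_mem hy, mul_one]
          · have hnm : u - y ∉ Set.Icc (0:ℝ) ε := by
              simp only [Set.mem_Icc, not_and, not_le] at hy ⊢
              intro h0
              by_cases hyu : u - ε ≤ y
              · linarith [hy hyu]
              · push_neg at hyu; linarith
            rw [Set.indicator_of_notMem hnm, Set.indicator_of_notMem hy, mul_zero]
        simp only [h1]
        exact integral_indicator measurableSet_Icc
      have hR : ⇑(Sm t (Tφ f)) =ᵐ[wmp p.toReal ω] fun x => ∫ y in Set.Icc (x + t - ε) (x + t), φ y := by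
        refine ((hSm t ht.le (Tφ f)).trans
          (Lemma5Aux.shift_ae hω_cont hω_pos ht.le (hTφ f))).trans
          (Filter.EventuallyEq.of_eq (funext fun x => ?_))
        exact hG (x + t)
      have hfinal : (fun x => ∫ y in Set.Icc (x + t - ε) (x + t), φ y) =ᵐ[wmp p.toReal ω]
          fun _ => (0:ℂ) := hR.symm.trans (heq ▸ hL)
      have hcontH : Continuous fun x : ℝ => ∫ y in Set.Icc (x + t - ε) (x + t), φ y := by
        have : (fun x : ℝ => ∫ y in Set.Icc (x + t - ε) (x + t), φ y)
            = fun x => Φ (x + t) - Φ (x + t - ε) := by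
          funext x; exact hIcc _ _ (by linarith)
        rw [this]
        exact (hΦcont.comp (continuous_id.add continuous_const)).sub
          (hΦcont.comp ((continuous_id.add continuous_const).sub continuous_const))
      have h00 := Lemma5Aux.vanish hω_cont hω_pos hcontH hfinal 0 le_rfl
      simpa using h00
    have hΦconst : ∀ a b : ℝ, 0 < a → a ≤ b → Φ b = Φ a := by
      intro a b ha hab
      rcases eq_or_lt_of_le hab with rfl | h
      · rfl
      · have h0 := hconst b (by linarith) (b - a) (by linarith) (by linarith)
        rw [show b - (b - a) = a by ring] at h0
        have h1 := hIcc a b hab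
        rw [h0] at h1
        exact sub_eq_zero.mp h1.symm
    have hzero : ∀ s : ℝ, 0 < s → φ s = 0 := by
      intro s hs
      have hev : Φ =ᶠ[𝓝 s] fun _ => Φ s := by
        have hmem : Set.Ioo (s/2) (2*s) ∈ 𝓝 s := Ioo_mem_nhds (by linarith) (by linarith)
        filter_upwards [hmem] with u hu
        rcases le_total s u with h | h
        · exact hΦconst s u hs h
        · exact (hΦconst u s (by linarith [hu.1]) h).symm
      have hd0 : HasDerivAt (fun _ : ℝ => Φ s) (φ s) s :=
        (hΦder s).congr_of_eventuallyEq hev.symm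
      exact ((hasDerivAt_const s (Φ s)).unique hd0).symm
    refine closure_minimal (fun x hx => ?_) isClosed_Iic
    by_contra hxle
    exact hx (hzero x (lt_of_not_ge hxle))
  · -- backward direction
    intro hsupp t ht
    refine ContinuousLinearMap.ext fun f => ?_
    rw [ContinuousLinearMap.comp_apply, ContinuousLinearMap.comp_apply]
    apply Lp.ext (μ := wmp p.toReal ω)
    have h3 : ∀ x : ℝ, (∫ y : ℝ, φ y * (Set.Ici (0:ℝ)).indicator (⇑(Sm t f)) (x - y))
        = ∫ y : ℝ, φ y * (Set.Ici (0:ℝ)).indicator (fun u => f (u + t)) (x - y) := fun x =>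
      Lemma5Aux.conv_congr hω_cont hω_pos φ (hSm t ht.le f) x
    have key : ∀ x : ℝ, 0 ≤ x →
        (∫ y : ℝ, φ y * (Set.Ici (0:ℝ)).indicator (fun u => f (u + t)) (x - y))
        = ∫ y : ℝ, φ y * (Set.Ici (0:ℝ)).indicator (⇑f) (x + t - y) := by
      intro x hx
      refine integral_congr_ae (Filter.Eventually.of_forall fun y => ?_)
      by_cases hy : φ y = 0
      · simp [hy]
      · have hy0 : y ≤ 0 := hsupp (subset_closure (Function.mem_support.mpr hy))
        have hx1 : x - y ∈ Set.Ici (0:ℝ) := by simp only [Set.mem_Ici]; linarith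
        have hx2 : x + t - y ∈ Set.Ici (0:ℝ) := by simp only [Set.mem_Ici]; linarith
        simp only [Set.indicator_of_mem hx1, Set.indicator_of_mem hx2,
          show x - y + t = x + t - y from by ring]
    calc ⇑(Tφ (Sm t f))
        =ᵐ[wmp p.toReal ω] fun x => ∫ y : ℝ, φ y * (Set.Ici (0:ℝ)).indicator (⇑(Sm t f)) (x - y) :=
          hTφ (Sm t f)
      _ = fun x => ∫ y : ℝ, φ y * (Set.Ici (0:ℝ)).indicator (fun u => f (u + t)) (x - y) :=
          funext h3
      _ =ᵐ[wmp p.toReal ω] fun x => ∫ y : ℝ, φ y * (Set.Ici (0:ℝ)).indicator (⇑f) (x + t - y) := by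
          filter_upwards [Lemma5Aux.ae_nonneg (p := p.toReal) (ω := ω)] with x hx
          exact key x hx
      _ =ᵐ[wmp p.toReal ω] fun x => (Tφ f : ℝ → ℂ) (x + t) :=
          (Lemma5Aux.shift_ae hω_cont hω_pos ht.le (hTφ f)).symm
      _ =ᵐ[wmp p.toReal ω] ⇑(Sm t (Tφ f)) := (hSm t ht.le (Tφ f)).symm
end
end
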